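/- arXiv:1711.01358 — 6 statements merged into one kernel-verified Lean document; each statement's English description precedes it below -/
import Mathlib

section
/- Let φ be a monotone Boolean formula defining a set S ⊆ {0,1}^n, let Q ⊆ [0,1]^n be a convex set containing S, and let p ∈ ℤ≥0. If every monotone inequality in standard form of pitch at most p that is valid for S is also valid for Q, then every monotone inequality in standard form of pitch at most p + 1 that is valid for S is valid for φ(Q). -/
/-- Reduced Boolean formulas: literals combined with `∧` and `∨`. -/
inductive Fml (n : ℕ) : Type
  | pos : Fin n → Fml n
  | neg : Fin n → Fml n
  | and : Fml n → Fml n → Fml n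
  | or  : Fml n → Fml n → Fml n

namespace Fml

/-- Evaluation of a reduced formula on a (0/1-valued) real point. -/
def eval {n : ℕ} : Fml n → (Fin n → ℝ) → Prop
  | pos i, x => x i = 1
  | neg i, x => x i = 0
  | and φ ψ, x => φ.eval x ∧ ψ.eval x
  | or φ ψ, x => φ.eval x ∨ ψ.eval x

/-- The set `φ(Q)` obtained by feeding the convex set `Q` into the formula `φ`. -/
def app {n : ℕ} : Fml n → Set (Fin n → ℝ) → Set (Fin n → ℝ)
  | pos i, Q => {x ∈ Q | x i = 1}
  | neg i, Q => {x ∈ Q | x i = 0}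
  | and φ ψ, Q => φ.app Q ∩ ψ.app Q
  | or φ ψ, Q => convexHull ℝ (φ.app Q ∪ ψ.app Q)

/-- A formula is monotone if it contains no negated literals. -/
def Monotone {n : ℕ} : Fml n → Prop
  | pos _ => True
  | neg _ => False
  | and φ ψ => φ.Monotone ∧ ψ.Monotone
  | or φ ψ => φ.Monotone ∧ ψ.Monotone

end Fml

/-- The 0/1 points of the cube. -/
def CubeVerts (n : ℕ) : Set (Fin n → ℝ) := {x | ∀ i, x i = 0 ∨ x i = 1}

/-- The inequality `∑ c i * x i ≥ δ` has pitch at most `p`: every subset `J` of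
the support of `c` with `|J| ≥ p` satisfies `∑_{j ∈ J} c j ≥ δ`. -/
def PitchLE {n : ℕ} (c : Fin n → ℝ) (δ : ℝ) (p : ℕ) : Prop :=
  ∀ J : Finset (Fin n), (∀ j ∈ J, c j ≠ 0) → p ≤ J.card → δ ≤ ∑ j ∈ J, c j

/-
Fix `c ≥ 0` and `δ > 0` of pitch at most `p + 1` with `c·v ≥ δ` on `S`, and induct over the
subformulas `ψ` of `φ` such that `c·v > 0` at every 0/1 model `v` of `ψ`; `φ` itself is one,
since its models are the points of `S`. For a literal `x_i` this forces `c_i > 0`, and on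
`{x ∈ Q | x_i = 1}` the inequality follows from `∑_{j ≠ i} c_j x_j ≥ δ - c_i`, which has pitch at
most `p` and is valid for `S`, hence for `Q`. A disjunction passes the property to both disjuncts,
and the half-space `c·x ≥ δ` is convex. For a conjunction, monotonicity lets one merge a zero-cost
model of each conjunct by taking their coordinatewise maximum, so one conjunct keeps the property.
-/

open Finset

theorem sup_mem_cubeVerts {n : ℕ} {v w : Fin n → ℝ} (hv : v ∈ CubeVerts n) (hw : w ∈ CubeVerts n) :
    v ⊔ w ∈ CubeVerts n := fun i => by
  rcases hv i with h | h <;> rcases hw i with h' | h' <;> simp [h, h']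

theorem le_one_of_mem_cubeVerts {n : ℕ} {v : Fin n → ℝ} (hv : v ∈ CubeVerts n) :
    v ≤ 1 := fun i => by
  rcases hv i with h | h <;> simp [h]

theorem nonneg_of_mem_cubeVerts {n : ℕ} {v : Fin n → ℝ} (hv : v ∈ CubeVerts n) :
    0 ≤ v := fun i => by
  rcases hv i with h | h <;> simp [h]

namespace Fml

variable {n : ℕ}

theorem eval_of_le {φ : Fml n} (hφ : φ.Monotone) {v w : Fin n → ℝ} (hvw : v ≤ w) (hw : w ≤ 1)
    (hv : φ.eval v) : φ.eval w := by
  induction φ with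
  | pos i => exact le_antisymm (hw i) (hv ▸ hvw i)
  | neg i => exact hφ.elim
  | and A B ihA ihB => exact ⟨ihA hφ.1 hv.1, ihB hφ.2 hv.2⟩
  | or A B ihA ihB => exact hv.imp (ihA hφ.1) (ihB hφ.2)

theorem app_subset_of_convex {Q H : Set (Fin n → ℝ)} (hH : Convex ℝ H) (hQH : Q ⊆ H) :
    ∀ φ : Fml n, φ.app Q ⊆ H
  | pos _ => fun _ hx => hQH hx.1
  | neg _ => fun _ hx => hQH hx.1
  | and A _ => fun _ hx => app_subset_of_convex hH hQH A hx.1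
  | or A B => convexHull_min
      (Set.union_subset (app_subset_of_convex hH hQH A) (app_subset_of_convex hH hQH B)) hH

def PosOnModels (φ : Fml n) (c : Fin n → ℝ) : Prop :=
  ∀ v ∈ CubeVerts n, φ.eval v → 0 < ∑ i, c i * v i

theorem PosOnModels.coeff_pos {i : Fin n} {c : Fin n → ℝ} (h : (pos i).PosOnModels c) :
    0 < c i := by
  have hv : Pi.single i (1 : ℝ) ∈ CubeVerts n := fun j => by
    rcases eq_or_ne j i with rfl | hj <;> simp [*]
  simpa [Pi.single_apply] using h _ hv (by simp [eval])

theorem PosOnModels.of_and {A B : Fml n} {c : Fin n → ℝ} (hA : A.Monotone) (hB : B.Monotone)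
    (hc : 0 ≤ c) (h : (and A B).PosOnModels c) : A.PosOnModels c ∨ B.PosOnModels c := by
  by_contra! hAB
  simp only [PosOnModels, not_forall, not_lt] at hAB
  obtain ⟨⟨v, hv, hAv, hcv⟩, ⟨w, hw, hBw, hcw⟩⟩ := hAB
  have hvw := sup_mem_cubeVerts hv hw
  have hpos := h _ hvw ⟨eval_of_le hA le_sup_left (le_one_of_mem_cubeVerts hvw) hAv,
    eval_of_le hB le_sup_right (le_one_of_mem_cubeVerts hvw) hBw⟩
  have hsub : ∑ i, c i * (v ⊔ w) i ≤ ∑ i, c i * v i + ∑ i, c i * w i := by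
    rw [← sum_add_distrib]
    gcongr with i
    rw [← mul_add]
    exact mul_le_mul_of_nonneg_left (max_le_add_of_nonneg (nonneg_of_mem_cubeVerts hv i)
      (nonneg_of_mem_cubeVerts hw i)) (hc i)
  linarith

end Fml

theorem PitchLE.update_zero {n : ℕ} {c : Fin n → ℝ} {δ : ℝ} {p : ℕ} {i : Fin n}
    (h : PitchLE c δ (p + 1)) (hci : c i ≠ 0) : PitchLE (Function.update c i 0) (δ - c i) p := by
  intro J hJ hcard
  have hiJ : i ∉ J := fun hi => hJ i hi (Function.update_self ..)
  have hsupp : ∀ j ∈ insert i J, c j ≠ 0 := by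
    intro j hj
    rcases mem_insert.1 hj with rfl | hj
    · exact hci
    · simpa [Function.update_of_ne (ne_of_mem_of_not_mem hj hiJ)] using hJ j hj
  have hsum : ∑ j ∈ J, Function.update c i 0 j = ∑ j ∈ J, c j :=
    sum_congr rfl fun j hj => Function.update_of_ne (ne_of_mem_of_not_mem hj hiJ) ..
  have := h _ hsupp (by rw [card_insert_of_notMem hiJ]; omega)
  rw [sum_insert hiJ] at this
  linarith

theorem sum_mul_eq_add_sum_update_zero {n : ℕ} (c x : Fin n → ℝ) (i : Fin n) :
    ∑ j, c j * x j = c i * x i + ∑ j, Function.update c i 0 j * x j := by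
  rw [← add_sum_erase _ _ (mem_univ i), ← add_sum_erase _ _ (mem_univ i),
    Function.update_self, zero_mul, zero_add]
  exact congrArg _ (sum_congr rfl fun j hj => by rw [Function.update_of_ne (ne_of_mem_erase hj)])

theorem convex_halfSpace_sum_mul_ge {n : ℕ} (c : Fin n → ℝ) (δ : ℝ) :
    Convex ℝ {x : Fin n → ℝ | δ ≤ ∑ i, c i * x i} :=
  convex_halfSpace_ge ⟨fun x y => by simp [mul_add, sum_add_distrib],
    fun a x => by simp [mul_sum, mul_left_comm]⟩ δ

section PitchReduction

variable {n p : ℕ} {S Q : Set (Fin n → ℝ)} {c : Fin n → ℝ} {δ : ℝ}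

theorem le_sum_of_literal (hS1 : ∀ v ∈ S, v ≤ 1) (hQ0 : ∀ x ∈ Q, 0 ≤ x)
    (hQvalid : ∀ (c : Fin n → ℝ) (δ : ℝ), (∀ i, 0 ≤ c i) → 0 ≤ δ → PitchLE c δ p →
      (∀ x ∈ S, δ ≤ ∑ i, c i * x i) → ∀ x ∈ Q, δ ≤ ∑ i, c i * x i)
    (hc : 0 ≤ c) (hpitch : PitchLE c δ (p + 1)) (hvalid : ∀ v ∈ S, δ ≤ ∑ i, c i * v i)
    {i : Fin n} (hci : 0 < c i) {x : Fin n → ℝ} (hx : x ∈ Q) (hxi : x i = 1) :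
    δ ≤ ∑ j, c j * x j := by
  set c' := Function.update c i 0
  have hc' : 0 ≤ c' := le_update_iff.2 ⟨le_rfl, fun j _ => hc j⟩
  rw [sum_mul_eq_add_sum_update_zero c x i, hxi, mul_one]
  rcases le_total δ (c i) with hδ | hδ
  · have : 0 ≤ ∑ j, c' j * x j := sum_nonneg fun j _ => mul_nonneg (hc' j) (hQ0 x hx j)
    linarith
  · have hvalid' : ∀ v ∈ S, δ - c i ≤ ∑ j, c' j * v j := fun v hv => by
      have hcv := hvalid v hv
      rw [sum_mul_eq_add_sum_update_zero c v i] at hcv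
      have := mul_le_of_le_one_right hci.le (hS1 v hv i)
      linarith
    have := hQvalid c' (δ - c i) hc' (sub_nonneg.2 hδ) (hpitch.update_zero hci.ne') hvalid' x hx
    linarith

theorem app_subset_halfSpace (hS1 : ∀ v ∈ S, v ≤ 1) (hQ0 : ∀ x ∈ Q, 0 ≤ x)
    (hQvalid : ∀ (c : Fin n → ℝ) (δ : ℝ), (∀ i, 0 ≤ c i) → 0 ≤ δ → PitchLE c δ p →
      (∀ x ∈ S, δ ≤ ∑ i, c i * x i) → ∀ x ∈ Q, δ ≤ ∑ i, c i * x i)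
    (hc : 0 ≤ c) (hpitch : PitchLE c δ (p + 1)) (hvalid : ∀ v ∈ S, δ ≤ ∑ i, c i * v i)
    {φ : Fml n} (hφ : φ.Monotone) (hpos : φ.PosOnModels c) :
    φ.app Q ⊆ {x | δ ≤ ∑ i, c i * x i} := by
  induction φ with
  | pos i => exact fun x hx =>
      le_sum_of_literal hS1 hQ0 hQvalid hc hpitch hvalid hpos.coeff_pos hx.1 hx.2
  | neg i => exact hφ.elim
  | and A B ihA ihB =>
      rcases hpos.of_and hφ.1 hφ.2 hc with hA | hB
      · exact fun x hx => ihA hφ.1 hA hx.1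
      · exact fun x hx => ihB hφ.2 hB hx.2
  | or A B ihA ihB =>
      refine convexHull_min (Set.union_subset ?_ ?_) (convex_halfSpace_sum_mul_ge c δ)
      · exact ihA hφ.1 fun v hv hAv => hpos v hv (.inl hAv)
      · exact ihB hφ.2 fun v hv hBv => hpos v hv (.inr hBv)

end PitchReduction

theorem stmt2_general {n : ℕ} (φ : Fml n) (hmono : φ.Monotone) (S Q : Set (Fin n → ℝ))
    (hS : S = {x ∈ CubeVerts n | φ.eval x})
    (hQcube : Q ⊆ Set.Icc (0 : Fin n → ℝ) 1)
    (p : ℕ)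
    (hQvalid : ∀ (c : Fin n → ℝ) (δ : ℝ), (∀ i, 0 ≤ c i) → 0 ≤ δ → PitchLE c δ p →
      (∀ x ∈ S, δ ≤ ∑ i, c i * x i) → ∀ x ∈ Q, δ ≤ ∑ i, c i * x i) :
    ∀ (c : Fin n → ℝ) (δ : ℝ), (∀ i, 0 ≤ c i) → 0 ≤ δ → PitchLE c δ (p + 1) →
      (∀ x ∈ S, δ ≤ ∑ i, c i * x i) → ∀ x ∈ φ.app Q, δ ≤ ∑ i, c i * x i := by
  intro c δ hc hδ hpitch hvalid x hx
  rcases hδ.eq_or_lt with rfl | hδ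
  · have hx01 := φ.app_subset_of_convex (convex_Icc 0 1) hQcube hx
    exact sum_nonneg fun i _ => mul_nonneg (hc i) (hx01.1 i)
  have hS1 : ∀ v ∈ S, v ≤ 1 := by
    subst hS
    exact fun v hv => le_one_of_mem_cubeVerts hv.1
  have hpos : φ.PosOnModels c := fun v hv hφv => hδ.trans_le (hvalid v (hS ▸ ⟨hv, hφv⟩))
  exact app_subset_halfSpace hS1 (fun y hy => (hQcube hy).1) hQvalid hc hpitch hvalid hmono hpos hx

theorem stmt2 {n : ℕ} (φ : Fml n) (hmono : φ.Monotone) (S Q : Set (Fin n → ℝ))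
    (hS : S = {x ∈ CubeVerts n | φ.eval x})
    (hQconv : Convex ℝ Q) (hQcube : Q ⊆ Set.Icc (0 : Fin n → ℝ) 1) (hSQ : S ⊆ Q)
    (p : ℕ)
    (hQvalid : ∀ (c : Fin n → ℝ) (δ : ℝ), (∀ i, 0 ≤ c i) → 0 ≤ δ → PitchLE c δ p →
      (∀ x ∈ S, δ ≤ ∑ i, c i * x i) → ∀ x ∈ Q, δ ≤ ∑ i, c i * x i) :
    ∀ (c : Fin n → ℝ) (δ : ℝ), (∀ i, 0 ≤ c i) → 0 ≤ δ → PitchLE c δ (p + 1) →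
      (∀ x ∈ S, δ ≤ ∑ i, c i * x i) → ∀ x ∈ φ.app Q, δ ≤ ∑ i, c i * x i :=
  stmt2_general φ hmono S Q hS hQcube p hQvalid
end

section
/- Let φ be a reduced Boolean formula defining a set S ⊆ {0,1}^n, let Q ⊆ [0,1]^n be a convex set containing S, and let ν ∈ ℤ≥0. If every inequality in standard form of notch at most ν that is valid for S is also valid for Q, then every inequality in standard form of notch at most ν + 1 that is valid for S is valid for φ(Q). -/
/-- The inequality in standard form determined by `I⁺ = Ip`, `I⁻ = Ipᶜ`, `c`, `δ`
(namely `∑_{i ∈ I⁺} c i * x i + ∑_{i ∈ I⁻} c i * (1 - x i) ≥ δ`) is valid for `T`. -/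
def StdValid {n : ℕ} (Ip : Finset (Fin n)) (c : Fin n → ℝ) (δ : ℝ)
    (T : Set (Fin n → ℝ)) : Prop :=
  ∀ x ∈ T, δ ≤ ∑ i ∈ Ip, c i * x i + ∑ i ∈ Ipᶜ, c i * (1 - x i)

/-- The inequality in standard form with coefficients `c` and right-hand side `δ`
has notch at most `ν`: every `J ⊆ [n]` with `|J| ≥ ν` satisfies `∑_{j ∈ J} c j ≥ δ`. -/
def NotchLE {n : ℕ} (c : Fin n → ℝ) (δ : ℝ) (ν : ℕ) : Prop :=
  ∀ J : Finset (Fin n), ν ≤ J.card → δ ≤ ∑ j ∈ J, c j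

namespace Stmt3Aux

variable {n : ℕ}

/-- The left-hand side of a standard inequality, as a single sum over all coordinates. -/
def Lhs (Ip : Finset (Fin n)) (c : Fin n → ℝ) (x : Fin n → ℝ) : ℝ :=
  ∑ i : Fin n, (if i ∈ Ip then c i * x i else c i * (1 - x i))

lemma lhs_eq (Ip : Finset (Fin n)) (c x : Fin n → ℝ) :
    ∑ i ∈ Ip, c i * x i + ∑ i ∈ Ipᶜ, c i * (1 - x i) = Lhs Ip c x := by
  unfold Lhs
  rw [← Finset.sum_add_sum_compl Ip]
  congr 1
  · exact Finset.sum_congr rfl fun i hi => (if_pos hi).symm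
  · exact Finset.sum_congr rfl fun i hi => (if_neg (Finset.mem_compl.mp hi)).symm

lemma stdValid_iff (Ip : Finset (Fin n)) (c : Fin n → ℝ) (δ : ℝ) (T : Set (Fin n → ℝ)) :
    StdValid Ip c δ T ↔ ∀ x ∈ T, δ ≤ Lhs Ip c x := by
  unfold StdValid
  constructor
  · intro h x hx; rw [← lhs_eq]; exact h x hx
  · intro h x hx; rw [lhs_eq]; exact h x hx

lemma lhs_split (Ip : Finset (Fin n)) (c x : Fin n → ℝ) (k : Fin n) :
    Lhs Ip c x = (∑ i ∈ Finset.univ.erase k, (if i ∈ Ip then c i * x i else c i * (1 - x i)))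
      + (if k ∈ Ip then c k * x k else c k * (1 - x k)) := by
  unfold Lhs
  exact (Finset.sum_erase_add _ _ (Finset.mem_univ k)).symm

lemma lhs_nonneg (Ip : Finset (Fin n)) (c x : Fin n → ℝ) (hc : ∀ i, 0 ≤ c i)
    (hx : ∀ i, 0 ≤ x i ∧ x i ≤ 1) : 0 ≤ Lhs Ip c x := by
  refine Finset.sum_nonneg fun i _ => ?_
  by_cases h : i ∈ Ip
  · rw [if_pos h]; exact mul_nonneg (hc i) (hx i).1
  · rw [if_neg h]; exact mul_nonneg (hc i) (by linarith [(hx i).2])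

lemma halfspace_convex (Ip : Finset (Fin n)) (c : Fin n → ℝ) (δ : ℝ) :
    Convex ℝ {z : Fin n → ℝ | δ ≤ Lhs Ip c z} := by
  intro x hx y hy a b ha hb hab
  simp only [Set.mem_setOf_eq] at hx hy ⊢
  have hcombo : Lhs Ip c (a • x + b • y) = a * Lhs Ip c x + b * Lhs Ip c y := by
    unfold Lhs
    rw [Finset.mul_sum, Finset.mul_sum, ← Finset.sum_add_distrib]
    refine Finset.sum_congr rfl fun i _ => ?_
    by_cases h : i ∈ Ip
    · simp only [if_pos h, Pi.add_apply, Pi.smul_apply, smul_eq_mul]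
      ring
    · simp only [if_neg h, Pi.add_apply, Pi.smul_apply, smul_eq_mul]
      linear_combination (-(c i)) * hab
  rw [hcombo]
  calc δ = a * δ + b * δ := by rw [← add_mul, hab, one_mul]
  _ ≤ a * Lhs Ip c x + b * Lhs Ip c y :=
      add_le_add (mul_le_mul_of_nonneg_left hx ha) (mul_le_mul_of_nonneg_left hy hb)

/-- The key "face lemma": any point of `Q` lying on the face where coordinate `k` takes its
`Ip`-active value satisfies the inequality. -/
lemma face_lemma (S Q : Set (Fin n → ℝ))
    (hScube : ∀ v ∈ S, ∀ i, v i = 0 ∨ v i = 1)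
    (ν : ℕ)
    (hQvalid : ∀ (Ip : Finset (Fin n)) (c : Fin n → ℝ) (δ : ℝ),
      (∀ i, 0 ≤ c i) → 0 ≤ δ → NotchLE c δ ν → StdValid Ip c δ S → StdValid Ip c δ Q)
    (Ip : Finset (Fin n)) (c : Fin n → ℝ) (δ : ℝ)
    (hc : ∀ i, 0 ≤ c i) (hδ : 0 ≤ δ) (hN : NotchLE c δ (ν + 1))
    (hvalS : StdValid Ip c δ S)
    (k : Fin n) :
    ∀ z ∈ Q, z k = (if k ∈ Ip then (1:ℝ) else 0) → δ ≤ Lhs Ip c z := by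
  classical
  set Ip' : Finset (Fin n) := if k ∈ Ip then Ip.erase k else insert k Ip with hIp'
  set c' : Fin n → ℝ := Function.update c k δ with hc'
  set δ' : ℝ := max (δ - c k) 0 with hδ'
  -- the common "rest" sum
  set R : (Fin n → ℝ) → ℝ :=
    fun x => ∑ i ∈ Finset.univ.erase k, (if i ∈ Ip then c i * x i else c i * (1 - x i)) with hR
  have hmem' : ∀ i, i ≠ k → (i ∈ Ip' ↔ i ∈ Ip) := by
    intro i hik
    by_cases h : k ∈ Ip
    · rw [hIp', if_pos h, Finset.mem_erase]
      exact ⟨fun h2 => h2.2, fun h2 => ⟨hik, h2⟩⟩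
    · rw [hIp', if_neg h, Finset.mem_insert]
      constructor
      · rintro (h2 | h2); exact absurd h2 hik; exact h2
      · exact fun h2 => Or.inr h2
  have hkmem' : (k ∈ Ip') ↔ ¬ (k ∈ Ip) := by
    by_cases h : k ∈ Ip
    · rw [hIp', if_pos h]
      simp [Finset.notMem_erase, h]
    · rw [hIp', if_neg h]
      simp [h]
  -- expression of the modified LHS
  have hLhs' : ∀ x : Fin n → ℝ,
      Lhs Ip' c' x = R x + (if k ∈ Ip then δ * (1 - x k) else δ * x k) := by
    intro x
    rw [lhs_split Ip' c' x k, hR]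
    congr 1
    · refine Finset.sum_congr rfl fun i hi => ?_
      have hik : i ≠ k := (Finset.mem_erase.mp hi).1
      rw [hc', Function.update_of_ne hik]
      by_cases h2 : i ∈ Ip
      · rw [if_pos ((hmem' i hik).mpr h2), if_pos h2]
      · rw [if_neg (fun hm => h2 ((hmem' i hik).mp hm)), if_neg h2]
    · rw [hc', Function.update_self]
      by_cases h : k ∈ Ip
      · rw [if_neg (by rw [hkmem']; exact fun h2 => h2 h), if_pos h]
      · rw [if_pos (hkmem'.mpr h), if_neg h]
  have hLhs : ∀ x : Fin n → ℝ,
      Lhs Ip c x = R x + (if k ∈ Ip then c k * x k else c k * (1 - x k)) :=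
    fun x => lhs_split Ip c x k
  have hR0 : ∀ x : Fin n → ℝ, (∀ i, 0 ≤ x i ∧ x i ≤ 1) → 0 ≤ R x := by
    intro x hx
    refine Finset.sum_nonneg fun i _ => ?_
    by_cases h : i ∈ Ip
    · rw [if_pos h]; exact mul_nonneg (hc i) (hx i).1
    · rw [if_neg h]; exact mul_nonneg (hc i) (by linarith [(hx i).2])
  have hc'0 : ∀ i, 0 ≤ c' i := by
    intro i
    by_cases h : i = k
    · subst h; rw [hc', Function.update_self]; exact hδ
    · rw [hc', Function.update_of_ne h]; exact hc i
  have hδ'0 : 0 ≤ δ' := le_max_right _ _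
  have hδ'δ : δ' ≤ δ := max_le (by linarith [hc k]) hδ
  -- notch of the modified inequality
  have hN' : NotchLE c' δ' ν := by
    intro J hJ
    by_cases hkJ : k ∈ J
    · rw [← Finset.sum_erase_add J c' hkJ, hc', Function.update_self]
      have h1 : 0 ≤ ∑ j ∈ J.erase k, Function.update c k δ j := by
        refine Finset.sum_nonneg fun j hj => ?_
        rw [Function.update_of_ne (Finset.mem_erase.mp hj).1]
        exact hc j
      calc δ' ≤ δ := hδ'δ
      _ ≤ (∑ j ∈ J.erase k, Function.update c k δ j) + δ := by linarith
    · have hsum : ∑ j ∈ J, c' j = ∑ j ∈ J, c j := by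
        refine Finset.sum_congr rfl fun j hj => ?_
        rw [hc', Function.update_of_ne (fun h : j = k => hkJ (h ▸ hj))]
      rw [hsum]
      have hins := hN (insert k J) (by
        rw [Finset.card_insert_of_notMem hkJ]
        exact Nat.succ_le_succ hJ)
      rw [Finset.sum_insert hkJ] at hins
      have h0 : 0 ≤ ∑ j ∈ J, c j := Finset.sum_nonneg fun j _ => hc j
      exact max_le (by linarith) h0
  -- validity of the modified inequality for S
  have hvalS' : StdValid Ip' c' δ' S := by
    rw [stdValid_iff]
    intro v hv
    have hLv : δ ≤ Lhs Ip c v := (stdValid_iff Ip c δ S).mp hvalS v hv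
    have hv01 : ∀ i, 0 ≤ v i ∧ v i ≤ 1 := by
      intro i
      rcases hScube v hv i with h | h <;> rw [h] <;> norm_num
    have hRv : 0 ≤ R v := hR0 v hv01
    rw [hLhs' v]
    rcases hScube v hv k with hvk | hvk <;> by_cases h : k ∈ Ip
    · -- v k = 0, k ∈ Ip : t = 0 case
      rw [if_pos h, hvk]
      have : δ * (1 - 0) = δ := by ring
      rw [this]
      linarith
    · -- v k = 0, k ∉ Ip : t = 1 case
      rw [if_neg h, hvk, mul_zero, add_zero]
      rw [hLhs v, if_neg h, hvk] at hLv
      refine max_le ?_ hRv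
      have : c k * (1 - 0) = c k := by ring
      rw [this] at hLv
      linarith
    · -- v k = 1, k ∈ Ip : t = 1 case
      rw [if_pos h, hvk]
      have : δ * (1 - 1) = 0 := by ring
      rw [this, add_zero]
      rw [hLhs v, if_pos h, hvk, mul_one] at hLv
      exact max_le (by linarith) hRv
    · -- v k = 1, k ∉ Ip : t = 0 case
      rw [if_neg h, hvk, mul_one]
      linarith
  -- apply the hypothesis on Q
  have hQ' : StdValid Ip' c' δ' Q := hQvalid Ip' c' δ' hc'0 hδ'0 hN' hvalS'
  intro z hz hzk
  have hzQ : δ' ≤ Lhs Ip' c' z := (stdValid_iff Ip' c' δ' Q).mp hQ' z hz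
  rw [hLhs' z] at hzQ
  rw [hLhs z]
  by_cases h : k ∈ Ip
  · rw [if_pos h] at hzk ⊢
    rw [if_pos h, hzk] at hzQ
    have h1 : δ * (1 - 1) = 0 := by ring
    rw [h1, add_zero] at hzQ
    rw [hzk, mul_one]
    have := le_max_left (δ - c k) 0
    linarith
  · rw [if_neg h] at hzk ⊢
    rw [if_neg h, hzk, mul_zero, add_zero] at hzQ
    rw [hzk]
    have h1 : c k * (1 - 0) = c k := by ring
    rw [h1]
    have := le_max_left (δ - c k) 0
    linarith

lemma app_subset (Q : Set (Fin n → ℝ)) (hQ : Convex ℝ Q) :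
    ∀ φ : Fml n, φ.app Q ⊆ Q := by
  intro φ
  induction φ with
  | pos i => exact fun x hx => hx.1
  | neg i => exact fun x hx => hx.1
  | and a b iha ihb => exact fun x hx => iha hx.1
  | or a b iha ihb => exact convexHull_min (Set.union_subset iha ihb) hQ

/-- If the "zero vertex" of the inequality does not satisfy `ψ`, then `ψ(Q)` is contained in
the convex hull of the active faces of `Q`. -/
lemma evalFalse_subset (Ip : Finset (Fin n)) (Q : Set (Fin n → ℝ)) :
    ∀ ψ : Fml n, ¬ ψ.eval (fun i => if i ∈ Ip then (0:ℝ) else 1) →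
      ψ.app Q ⊆ convexHull ℝ
        (⋃ k, {z : Fin n → ℝ | z ∈ Q ∧ z k = (if k ∈ Ip then (1:ℝ) else 0)}) := by
  intro ψ
  induction ψ with
  | pos i =>
    intro hev x hx
    have hi : i ∈ Ip := by
      by_contra h
      exact hev (by simp only [Fml.eval, if_neg h])
    refine subset_convexHull ℝ _ ?_
    refine Set.mem_iUnion.mpr ⟨i, ?_⟩
    exact ⟨hx.1, by rw [if_pos hi]; exact hx.2⟩
  | neg i =>
    intro hev x hx
    have hi : i ∉ Ip := by
      intro h
      exact hev (by simp only [Fml.eval, if_pos h])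
    refine subset_convexHull ℝ _ ?_
    refine Set.mem_iUnion.mpr ⟨i, ?_⟩
    exact ⟨hx.1, by rw [if_neg hi]; exact hx.2⟩
  | and a b iha ihb =>
    intro hev x hx
    rcases not_and_or.mp hev with h | h
    · exact iha h hx.1
    · exact ihb h hx.2
  | or a b iha ihb =>
    intro hev
    have h1 : ¬ a.eval (fun i => if i ∈ Ip then (0:ℝ) else 1) := fun h => hev (Or.inl h)
    have h2 : ¬ b.eval (fun i => if i ∈ Ip then (0:ℝ) else 1) := fun h => hev (Or.inr h)
    exact convexHull_min (Set.union_subset (iha h1) (ihb h2)) (convex_convexHull ℝ _)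

end Stmt3Aux

theorem stmt3 {n : ℕ} (φ : Fml n) (S Q : Set (Fin n → ℝ))
    (hS : S = {x ∈ CubeVerts n | φ.eval x})
    (hQconv : Convex ℝ Q) (hQcube : Q ⊆ Set.Icc (0 : Fin n → ℝ) 1) (hSQ : S ⊆ Q)
    (ν : ℕ)
    (hQvalid : ∀ (Ip : Finset (Fin n)) (c : Fin n → ℝ) (δ : ℝ),
      (∀ i, 0 ≤ c i) → 0 ≤ δ → NotchLE c δ ν → StdValid Ip c δ S → StdValid Ip c δ Q) :
    ∀ (Ip : Finset (Fin n)) (c : Fin n → ℝ) (δ : ℝ),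
      (∀ i, 0 ≤ c i) → 0 ≤ δ → NotchLE c δ (ν + 1) → StdValid Ip c δ S →
        StdValid Ip c δ (φ.app Q) := by
  intro Ip c δ hc hδ hN hvalS
  classical
  have hScube : ∀ v ∈ S, ∀ i, v i = 0 ∨ v i = 1 := by
    intro v hv i
    rw [hS] at hv
    exact hv.1 i
  rw [Stmt3Aux.stdValid_iff]
  by_cases hev : φ.eval (fun i => if i ∈ Ip then (0:ℝ) else 1)
  · -- the zero vertex satisfies φ, hence δ ≤ 0 and the LHS is nonnegative on Q
    have hv0S : (fun i => if i ∈ Ip then (0:ℝ) else 1) ∈ S := by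
      rw [hS]
      refine ⟨fun i => ?_, hev⟩
      by_cases h : i ∈ Ip
      · left; simp [h]
      · right; simp [h]
    have hδ0 : δ ≤ 0 := by
      have h1 := (Stmt3Aux.stdValid_iff Ip c δ S).mp hvalS _ hv0S
      have h2 : Stmt3Aux.Lhs Ip c (fun i => if i ∈ Ip then (0:ℝ) else 1) = 0 := by
        unfold Stmt3Aux.Lhs
        refine Finset.sum_eq_zero fun i _ => ?_
        by_cases h : i ∈ Ip <;> simp [h]
      rw [h2] at h1
      exact h1
    intro x hx
    have hxQ : x ∈ Q := Stmt3Aux.app_subset Q hQconv φ hx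
    have hx01 : ∀ i, 0 ≤ x i ∧ x i ≤ 1 := by
      intro i
      have h := hQcube hxQ
      exact ⟨h.1 i, h.2 i⟩
    have := Stmt3Aux.lhs_nonneg Ip c x hc hx01
    linarith
  · -- the zero vertex does not satisfy φ: use the face decomposition
    intro x hx
    have hsub := Stmt3Aux.evalFalse_subset Ip Q φ hev hx
    have hhull : convexHull ℝ
        (⋃ k, {z : Fin n → ℝ | z ∈ Q ∧ z k = (if k ∈ Ip then (1:ℝ) else 0)})
        ⊆ {z : Fin n → ℝ | δ ≤ Stmt3Aux.Lhs Ip c z} := by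
      refine convexHull_min ?_ (Stmt3Aux.halfspace_convex Ip c δ)
      refine Set.iUnion_subset fun k z hz => ?_
      exact Stmt3Aux.face_lemma S Q hScube ν hQvalid Ip c δ hc hδ hN hvalS k z hz.1 hz.2
    exact hhull hsub
end

section
/- Let φ be a monotone Boolean formula defining a set S ⊆ {0,1}^n and let Q ⊆ [0,1]^n be a convex set containing S. Then for every k ∈ ℤ≥1, every monotone inequality in standard form of pitch at most k that is valid for S is valid for φ^k(Q), where φ^1(Q) := φ(Q) and φ^{ℓ+1}(Q) := φ(φ^ℓ(Q)). -/
namespace Fml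

/-- Iterated application: `φ^0(Q) = Q` and `φ^{ℓ+1}(Q) = φ(φ^ℓ(Q))`. -/
def iterApp {n : ℕ} (φ : Fml n) : ℕ → Set (Fin n → ℝ) → Set (Fin n → ℝ)
  | 0, Q => Q
  | k + 1, Q => φ.app (φ.iterApp k Q)

end Fml

lemma Fml.app_subset {n : ℕ} (φ : Fml n) {R Q : Set (Fin n → ℝ)} (hQ : Convex ℝ Q)
    (h : R ⊆ Q) : φ.app R ⊆ Q := by
  induction φ with
  | pos i => exact fun x hx => h hx.1
  | neg i => exact fun x hx => h hx.1
  | and φ ψ ihφ ihψ => exact fun x hx => ihφ hx.1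
  | or φ ψ ihφ ihψ =>
      exact convexHull_min (Set.union_subset ihφ ihψ) hQ

lemma Fml.iterApp_subset {n : ℕ} (φ : Fml n) {Q : Set (Fin n → ℝ)} (hQ : Convex ℝ Q) :
    ∀ k, φ.iterApp k Q ⊆ Q
  | 0 => subset_rfl
  | (k+1) => φ.app_subset hQ (Fml.iterApp_subset φ hQ k)

lemma Fml.eval_mono {n : ℕ} (φ : Fml n) (hφ : φ.Monotone) {x y : Fin n → ℝ}
    (hxy : ∀ i, x i ≤ y i) (hy : ∀ i, y i = 0 ∨ y i = 1) (hx : φ.eval x) : φ.eval y := by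
  induction φ with
  | pos i =>
      rcases hy i with h | h
      · have := hxy i; simp only [Fml.eval] at hx ⊢; linarith
      · exact h
  | neg i => exact absurd hφ (by simp [Fml.Monotone])
  | and φ ψ ihφ ihψ => exact ⟨ihφ hφ.1 hx.1, ihψ hφ.2 hx.2⟩
  | or φ ψ ihφ ihψ => exact hx.elim (fun h => Or.inl (ihφ hφ.1 h)) (fun h => Or.inr (ihψ hφ.2 h))

lemma Fml.cover_lemma {n : ℕ} (φ : Fml n) (hφ : φ.Monotone) (c : Fin n → ℝ)
    (hcov : ∀ x ∈ CubeVerts n, φ.eval x → ∃ i, c i ≠ 0 ∧ x i = 1)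
    (R : Set (Fin n → ℝ)) :
    φ.app R ⊆ convexHull ℝ {y ∈ R | ∃ i, c i ≠ 0 ∧ y i = 1} := by
  induction φ with
  | pos i =>
      intro x hx
      have he : (fun j => if j = i then (1:ℝ) else 0) ∈ CubeVerts n := by
        intro j; by_cases h : j = i <;> simp [h]
      obtain ⟨j, hcj, hj1⟩ := hcov _ he (by simp [Fml.eval])
      have hji : j = i := by
        by_contra h; simp [h] at hj1
      exact subset_convexHull ℝ _ ⟨hx.1, j, hcj, by rw [hji]; exact hx.2⟩
  | neg i => exact absurd hφ (by simp [Fml.Monotone])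
  | and φ ψ ihφ ihψ =>
      by_cases h1 : ∀ x ∈ CubeVerts n, φ.eval x → ∃ i, c i ≠ 0 ∧ x i = 1
      · exact fun x hx => ihφ hφ.1 h1 hx.1
      by_cases h2 : ∀ x ∈ CubeVerts n, ψ.eval x → ∃ i, c i ≠ 0 ∧ x i = 1
      · exact fun x hx => ihψ hφ.2 h2 hx.2
      exfalso
      push_neg at h1 h2
      obtain ⟨y, hyC, hyev, hy0⟩ := h1
      obtain ⟨z, hzC, hzev, hz0⟩ := h2
      set w : Fin n → ℝ := fun i => max (y i) (z i) with hw
      have hwC : w ∈ CubeVerts n := by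
        intro i
        rcases hyC i with h | h <;> rcases hzC i with h' | h' <;> simp [hw, h, h']
      have hwev : (Fml.and φ ψ).eval w := by
        refine ⟨φ.eval_mono hφ.1 (fun i => le_max_left _ _) hwC hyev,
                ψ.eval_mono hφ.2 (fun i => le_max_right _ _) hwC hzev⟩
      obtain ⟨i, hci, hwi⟩ := hcov w hwC hwev
      have hyi := hy0 i hci
      have hzi := hz0 i hci
      rcases hyC i with h | h
      · rcases hzC i with h' | h'
        · simp [hw, h, h'] at hwi
        · exact hzi h'
      · exact hyi h
  | or φ ψ ihφ ihψ =>
      have c1 : ∀ x ∈ CubeVerts n, φ.eval x → ∃ i, c i ≠ 0 ∧ x i = 1 :=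
        fun x hx hev => hcov x hx (Or.inl hev)
      have c2 : ∀ x ∈ CubeVerts n, ψ.eval x → ∃ i, c i ≠ 0 ∧ x i = 1 :=
        fun x hx hev => hcov x hx (Or.inr hev)
      exact convexHull_min (Set.union_subset (ihφ hφ.1 c1) (ihψ hφ.2 c2)) (convex_convexHull ℝ _)

theorem stmt5' {n : ℕ} (φ : Fml n) (hmono : φ.Monotone) (S Q : Set (Fin n → ℝ))
    (hS : S = {x ∈ CubeVerts n | φ.eval x})
    (hQconv : Convex ℝ Q) (hQcube : Q ⊆ Set.Icc (0 : Fin n → ℝ) 1) (hSQ : S ⊆ Q)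
    (k : ℕ) :
    ∀ (c : Fin n → ℝ) (δ : ℝ), (∀ i, 0 ≤ c i) → 0 ≤ δ → PitchLE c δ k →
      (∀ x ∈ S, δ ≤ ∑ i, c i * x i) → ∀ x ∈ φ.iterApp k Q, δ ≤ ∑ i, c i * x i := by
  induction k with
  | zero =>
      intro c δ hc hδ hp _ x hx
      have h0 : δ ≤ 0 := by simpa using hp ∅ (by simp) (by simp)
      have hxQ : x ∈ Q := hx
      have : (0:ℝ) ≤ ∑ i, c i * x i :=
        Finset.sum_nonneg fun i _ => mul_nonneg (hc i) ((hQcube hxQ).1 i)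
      linarith
  | succ k ih =>
      intro c δ hc hδ hp hvalid x hx
      rcases eq_or_lt_of_le hδ with hδ0 | hδpos
      · have hxQ : x ∈ Q := φ.iterApp_subset hQconv (k+1) hx
        have : (0:ℝ) ≤ ∑ i, c i * x i :=
          Finset.sum_nonneg fun i _ => mul_nonneg (hc i) ((hQcube hxQ).1 i)
        linarith
      -- δ > 0 : supp(c) covers φ
      have hcov : ∀ y ∈ CubeVerts n, φ.eval y → ∃ i, c i ≠ 0 ∧ y i = 1 := by
        intro y hyC hyev
        have hval := hvalid y (by rw [hS]; exact ⟨hyC, hyev⟩)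
        by_contra h
        push_neg at h
        have hz : ∑ i, c i * y i = 0 := by
          refine Finset.sum_eq_zero fun i _ => ?_
          by_cases hci : c i = 0
          · simp [hci]
          · rcases hyC i with h' | h'
            · simp [h']
            · exact absurd h' (h i hci)
        rw [hz] at hval; linarith
      have hx' : x ∈ convexHull ℝ {y ∈ φ.iterApp k Q | ∃ i, c i ≠ 0 ∧ y i = 1} :=
        φ.cover_lemma hmono c hcov _ hx
      have hlin : IsLinearMap ℝ (fun y : Fin n → ℝ => ∑ i, c i * y i) := by
        constructor
        · intro a b; simp [mul_add, Finset.sum_add_distrib]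
        · intro r a; simp [Finset.mul_sum, mul_left_comm]
      have hhalf : Convex ℝ {y : Fin n → ℝ | δ ≤ ∑ i, c i * y i} :=
        convex_halfSpace_ge hlin δ
      refine convexHull_min ?_ hhalf hx'
      rintro y ⟨hyR, i, hci, hyi⟩
      -- restricted inequality
      set c' : Fin n → ℝ := fun j => if j = i then 0 else c j with hc'
      have hc'nn : ∀ j, 0 ≤ c' j := by
        intro j; by_cases h : j = i <;> simp [hc', h, hc j]
      have hsplit : ∀ z : Fin n → ℝ, ∑ j, c j * z j = (∑ j, c' j * z j) + c i * z i := by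
        intro z
        have key : ∀ j, c j * z j = c' j * z j + (if j = i then c i * z i else 0) := by
          intro j; by_cases h : j = i <;> simp [hc', h]
        rw [Finset.sum_congr rfl (fun j _ => key j), Finset.sum_add_distrib,
          Finset.sum_ite_eq' Finset.univ i (fun _ => c i * z i)]
        simp
      have hp' : PitchLE c' (max (δ - c i) 0) k := by
        intro J hJ hcard
        have hiJ : i ∉ J := fun h => hJ i h (by simp [hc'])
        have hJc : ∀ j ∈ J, c j ≠ 0 := by
          intro j hj
          have := hJ j hj
          by_cases h : j = i
          · exact absurd (h ▸ hj) hiJ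
          · simpa [hc', h] using this
        have hsum : ∑ j ∈ J, c' j = ∑ j ∈ J, c j := by
          refine Finset.sum_congr rfl fun j hj => ?_
          have h : j ≠ i := fun h => hiJ (h ▸ hj)
          simp [hc', h]
        have hins := hp (insert i J) (by
            intro j hj
            rcases Finset.mem_insert.mp hj with h | h
            · exact h ▸ hci
            · exact hJc j h)
          (by rw [Finset.card_insert_of_notMem hiJ]; omega)
        rw [Finset.sum_insert hiJ] at hins
        have hnn : (0:ℝ) ≤ ∑ j ∈ J, c j :=
          Finset.sum_nonneg fun j _ => hc j
        rw [hsum]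
        exact max_le (by linarith) hnn
      have hv' : ∀ z ∈ S, max (δ - c i) 0 ≤ ∑ j, c' j * z j := by
        intro z hz
        have h1 := hvalid z hz
        have hzC : z ∈ CubeVerts n := by rw [hS] at hz; exact hz.1
        have hnn : (0:ℝ) ≤ ∑ j, c' j * z j := by
          refine Finset.sum_nonneg fun j _ => mul_nonneg (hc'nn j) ?_
          rcases hzC j with h | h <;> simp [h]
        have hs := hsplit z
        refine max_le ?_ hnn
        rcases hzC i with h | h
        · rw [h] at hs; simp at hs
          have hcinn := hc i
          linarith
        · rw [h] at hs; simp at hs; linarith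
      have hIH := ih c' (max (δ - c i) 0) hc'nn (le_max_right _ _) hp' hv' y hyR
      have hs := hsplit y
      have hle : δ - c i ≤ max (δ - c i) 0 := le_max_left _ _
      show δ ≤ ∑ j, c j * y j
      rw [hs, hyi]
      linarith

theorem stmt5 {n : ℕ} (φ : Fml n) (hmono : φ.Monotone) (S Q : Set (Fin n → ℝ))
    (hS : S = {x ∈ CubeVerts n | φ.eval x})
    (hQconv : Convex ℝ Q) (hQcube : Q ⊆ Set.Icc (0 : Fin n → ℝ) 1) (hSQ : S ⊆ Q)
    (k : ℕ) (hk : 1 ≤ k) :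
    ∀ (c : Fin n → ℝ) (δ : ℝ), (∀ i, 0 ≤ c i) → 0 ≤ δ → PitchLE c δ k →
      (∀ x ∈ S, δ ≤ ∑ i, c i * x i) → ∀ x ∈ φ.iterApp k Q, δ ≤ ∑ i, c i * x i :=
  stmt5' φ hmono S Q hS hQconv hQcube hSQ k
end

section
/- Let φ be a reduced Boolean formula defining a nonempty set S ⊆ {0,1}^n and let Q ⊆ [0,1]^n be a convex set containing S. Then φ^n(Q) = conv(S), where φ^1(Q) := φ(Q) and φ^{ℓ+1}(Q) := φ(φ^ℓ(Q)). -/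
/-!
On an edge of the cube (a face with one free coordinate) a single application of `φ` already
gives the hull of the satisfying endpoints: literals cut an edge down to one of its faces, hulls
of subsets of a pair of points intersect like the subsets themselves (which handles `∧`), and
intersecting with a face commutes with taking hulls of subsets of the cube, because faces are
extreme subsets (which handles `∨`).

On a face `F` with `d + 1` free coordinates, either every vertex of `F` satisfies `φ`, or, by
induction on the formula, `φ(R) ∩ F` lies in the hull of points of `R ∩ F` with some free
coordinate in `{0, 1}`, i.e. of points of `R` on faces with `d` free coordinates. Hence after
`d + 1` applications every face with `d + 1` free coordinates meets `φ^{d+1}(Q)` only inside the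
hull of its satisfying vertices; for the whole cube, `d + 1 = n`.
-/

open Set Function

section Convex

variable {𝕜 E : Type*} [Semiring 𝕜] [PartialOrder 𝕜] [AddCommMonoid E] [Module 𝕜 E]

theorem IsExtreme.convexHull_inter_subset [IsOrderedRing 𝕜] {A B C : Set E} (hC : Convex 𝕜 C)
    (hCB : IsExtreme 𝕜 C B) (hAC : A ⊆ C) :
    convexHull 𝕜 A ∩ B ⊆ convexHull 𝕜 (A ∩ B) := by
  have hAC' : convexHull 𝕜 A ⊆ C := convexHull_min hAC hC
  let T := {y ∈ convexHull 𝕜 A | y ∈ B → y ∈ convexHull 𝕜 (A ∩ B)}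
  have hAT : A ⊆ T := fun a ha =>
    ⟨subset_convexHull 𝕜 A ha, fun hB => subset_convexHull 𝕜 _ ⟨ha, hB⟩⟩
  have hT : Convex 𝕜 T := by
    refine convex_iff_openSegment_subset.2 fun y hy z hz p hp =>
      ⟨(convex_convexHull 𝕜 A).openSegment_subset hy.1 hz.1 hp, fun hpB => ?_⟩
    have hyB := hCB.left_mem_of_mem_openSegment (hAC' hy.1) (hAC' hz.1) hpB hp
    have hzB := hCB.right_mem_of_mem_openSegment (hAC' hy.1) (hAC' hz.1) hpB hp
    exact (convex_convexHull 𝕜 _).openSegment_subset (hy.2 hyB) (hz.2 hzB) hp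
  exact fun x ⟨hx, hxB⟩ => (convexHull_min hAT hT hx).2 hxB

theorem isExtreme_univ_pi {ι : Type*} {M : ι → Type*} [∀ i, AddCommMonoid (M i)]
    [∀ i, Module 𝕜 (M i)] {s t : ∀ i, Set (M i)} (h : ∀ i, IsExtreme 𝕜 (s i) (t i)) :
    IsExtreme 𝕜 (univ.pi s) (univ.pi t) := by
  refine ⟨pi_mono fun i _ => (h i).subset, fun x₁ hx₁ x₂ hx₂ x hx hseg i _ => ?_⟩
  obtain ⟨a, b, ha, hb, hab, rfl⟩ := hseg
  exact (h i).left_mem_of_mem_openSegment (hx₁ i trivial) (hx₂ i trivial) (hx i trivial)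
    ⟨a, b, ha, hb, hab, rfl⟩

theorem convexHull_inter_convexHull_subset_of_subset_pair {u v : E} {t₁ t₂ : Set E}
    (h₁ : t₁ ⊆ {u, v}) (h₂ : t₂ ⊆ {u, v}) :
    convexHull 𝕜 t₁ ∩ convexHull 𝕜 t₂ ⊆ convexHull 𝕜 (t₁ ∩ t₂) := by
  by_cases e₁ : t₁ = {u, v}
  · subst e₁
    rw [inter_eq_right.2 h₂]
    exact inter_subset_right
  by_cases e₂ : t₂ = {u, v}
  · subst e₂
    rw [inter_eq_left.2 h₁]
    exact inter_subset_left
  have hconv : ∀ t : Set E, t ⊆ {u, v} → t ≠ {u, v} → Convex 𝕜 t := by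
    intro t ht hne
    rcases subset_pair_iff_eq.1 ht with rfl | rfl | rfl | rfl
    exacts [convex_empty, convex_singleton u, convex_singleton v, absurd rfl hne]
  rw [(hconv t₁ h₁ e₁).convexHull_eq, (hconv t₂ h₂ e₂).convexHull_eq]
  exact subset_convexHull 𝕜 _

end Convex

namespace UnitCube

/- A face of the cube is given by a partial assignment `σ : ι → Option Bool`: coordinate `i` is
free in `[0, 1]` if `σ i = none` and fixed to `b` if `σ i = some b`. -/

def coordVerts : Option Bool → Set ℝ
  | none => {0, 1}
  | some false => {0}
  | some true => {1}

def coordFace : Option Bool → Set ℝ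
  | none => Icc 0 1
  | some false => {0}
  | some true => {1}

lemma coordVerts_subset_pair (o : Option Bool) : coordVerts o ⊆ {0, 1} := by
  rcases o with _ | _ | _ <;> simp [coordVerts]

lemma convexHull_coordVerts (o : Option Bool) : convexHull ℝ (coordVerts o) = coordFace o := by
  rcases o with _ | _ | _
  · simp [coordVerts, coordFace, convexHull_pair]
  all_goals simp [coordVerts, coordFace]

lemma isExtreme_coordFace (o : Option Bool) : IsExtreme ℝ (Icc 0 1) (coordFace o) := by
  rcases o with _ | _ | _
  · exact IsExtreme.rfl
  all_goals simp [coordFace]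

lemma coordVerts_some_subset {o : Option Bool} {b : Bool} {t : ℝ} (ho : t ∈ coordFace o)
    (hb : t ∈ coordFace (some b)) : coordVerts (some b) ⊆ coordVerts o := by
  rcases o with _ | _ | _ <;> cases b <;> simp_all [coordFace, coordVerts]

lemma coordFace_some (b : Bool) : coordFace (some b) = coordVerts (some b) := by
  cases b <;> rfl

variable {ι : Type*} {σ : ι → Option Bool} {x y : ι → ℝ} {i : ι} {b : Bool}

def face (σ : ι → Option Bool) : Set (ι → ℝ) := univ.pi fun i => coordFace (σ i)

def faceVerts (σ : ι → Option Bool) : Set (ι → ℝ) := univ.pi fun i => coordVerts (σ i)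

lemma isExtreme_face : IsExtreme ℝ (Icc 0 1) (face σ) := by
  rw [← pi_univ_Icc]
  exact isExtreme_univ_pi fun i => isExtreme_coordFace (σ i)

lemma face_none : face (fun _ : ι => none) = Icc 0 1 := by
  rw [← pi_univ_Icc]; rfl

lemma faceVerts_none {n : ℕ} : faceVerts (fun _ : Fin n => none) = CubeVerts n := by
  ext x
  simp [faceVerts, coordVerts, CubeVerts]

lemma apply_eq_of_mem_face (hx : x ∈ face σ) (hy : y ∈ face σ) (hi : σ i ≠ none) :
    x i = y i := by
  obtain ⟨b, hb⟩ := Option.ne_none_iff_exists'.1 hi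
  have hxi : x i ∈ coordFace (σ i) := hx i trivial
  have hyi : y i ∈ coordFace (σ i) := hy i trivial
  rw [hb] at hxi hyi
  cases b <;> simp_all [coordFace]

section DecidableEq

variable [DecidableEq ι]

lemma mem_face_update (hx : x ∈ face σ) (hxi : x i ∈ coordFace (some b)) :
    x ∈ face (update σ i (some b)) := by
  intro j _
  rcases eq_or_ne j i with rfl | hj
  · simpa using hxi
  · simpa [hj] using hx j trivial

lemma faceVerts_update_subset (hx : x ∈ face σ) (hxi : x i ∈ coordFace (some b)) :
    faceVerts (update σ i (some b)) ⊆ faceVerts σ := by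
  intro w hw j _
  have hwj := hw j trivial
  rcases eq_or_ne j i with rfl | hj
  · exact coordVerts_some_subset (hx j trivial) hxi (by simpa using hwj)
  · simpa [hj] using hwj

end DecidableEq

variable [Fintype ι]

def freeCoords (σ : ι → Option Bool) : Finset ι := Finset.univ.filter fun i => σ i = none

lemma convexHull_faceVerts (σ : ι → Option Bool) : convexHull ℝ (faceVerts σ) = face σ := by
  simp only [faceVerts, face, convexHull_pi, convexHull_coordVerts]

lemma faceVerts_subset_face : faceVerts σ ⊆ face σ :=
  convexHull_faceVerts σ ▸ subset_convexHull ℝ _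

variable [DecidableEq ι]

lemma faceVerts_subset_pair {j : ι} (hx : x ∈ face σ)
    (hj : ∀ i ≠ j, σ i ≠ none) : faceVerts σ ⊆ {update x j 0, update x j 1} := by
  intro w hw
  have hw_eq : w = update x j (w j) := funext fun i => by
    rcases eq_or_ne i j with rfl | hi
    · simp
    · rw [update_of_ne hi]
      exact apply_eq_of_mem_face (faceVerts_subset_face hw) hx (hj i hi)
  rcases coordVerts_subset_pair (σ j) (hw j trivial) with h | h <;> rw [hw_eq, h] <;> simp

lemma mem_convexHull_faceVerts_of_apply_mem (hx : x ∈ face σ)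
    (hxi : x i ∈ coordFace (some b)) :
    x ∈ convexHull ℝ {w ∈ faceVerts σ | w i ∈ coordFace (some b)} := by
  have hx' := mem_face_update hx hxi
  rw [← convexHull_faceVerts] at hx'
  refine convexHull_mono (fun w hw => ?_) hx'
  exact ⟨faceVerts_update_subset hx hxi hw, by simpa [coordFace_some] using hw i trivial⟩

lemma card_free_update (hi : σ i = none) (b : Bool) :
    (freeCoords (update σ i (some b))).card + 1 = (freeCoords σ).card := by
  have : freeCoords (update σ i (some b)) = (freeCoords σ).erase i := by
    ext j
    by_cases hj : j = i <;> simp [freeCoords, update_apply, hj]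
  rw [this, Finset.card_erase_add_one (by simp [freeCoords, hi])]

end UnitCube

namespace Fml

open UnitCube

variable {n : ℕ} {R S Q C T : Set (Fin n → ℝ)} {x : Fin n → ℝ}

instance : IsEmpty (Fml 0) :=
  ⟨fun φ => by induction φ with
    | pos i | neg i => exact i.elim0
    | and _ _ ih | or _ _ ih => exact ih⟩

lemma app_subset_s6 (hC : Convex ℝ C) (hR : R ⊆ C) (ψ : Fml n) : ψ.app R ⊆ C := by
  induction ψ with
  | pos i | neg i => exact fun x hx => hR hx.1
  | and ψ₁ ψ₂ ih₁ _ => exact fun x hx => ih₁ hx.1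
  | or ψ₁ ψ₂ ih₁ ih₂ => exact convexHull_min (union_subset ih₁ ih₂) hC

lemma convex_app (hR : Convex ℝ R) (ψ : Fml n) : Convex ℝ (ψ.app R) := by
  induction ψ with
  | pos i => exact hR.inter (convex_hyperplane (LinearMap.proj i).isLinear 1)
  | neg i => exact hR.inter (convex_hyperplane (LinearMap.proj i).isLinear 0)
  | and ψ₁ ψ₂ ih₁ ih₂ => exact ih₁.inter ih₂
  | or ψ₁ ψ₂ => exact convex_convexHull ℝ _

lemma mem_app_of_eval {ψ : Fml n} (hx : x ∈ R) (h : ψ.eval x) : x ∈ ψ.app R := by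
  induction ψ with
  | pos i | neg i => exact ⟨hx, h⟩
  | and ψ₁ ψ₂ ih₁ ih₂ => exact ⟨ih₁ h.1, ih₂ h.2⟩
  | or ψ₁ ψ₂ ih₁ ih₂ =>
    exact subset_convexHull ℝ _ (h.elim (fun h => Or.inl (ih₁ h)) fun h => Or.inr (ih₂ h))

variable (φ : Fml n)

lemma iterApp_subset_s6 (hC : Convex ℝ C) (hQ : Q ⊆ C) (k : ℕ) : φ.iterApp k Q ⊆ C := by
  induction k with
  | zero => exact hQ
  | succ k ih => exact app_subset_s6 hC ih φ

lemma convex_iterApp (hQ : Convex ℝ Q) (k : ℕ) : Convex ℝ (φ.iterApp k Q) := by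
  induction k with
  | zero => exact hQ
  | succ k ih => exact convex_app ih φ

lemma subset_iterApp (hSQ : S ⊆ Q) (hS : ∀ x ∈ S, φ.eval x) (k : ℕ) : S ⊆ φ.iterApp k Q := by
  induction k with
  | zero => exact hSQ
  | succ k ih => exact fun x hx => mem_app_of_eval (ih hx) (hS x hx)

lemma app_or_inter_face_subset (hR : R ⊆ Icc 0 1) (ψ₁ ψ₂ : Fml n) (σ : Fin n → Option Bool) :
    (or ψ₁ ψ₂).app R ∩ face σ ⊆ convexHull ℝ (ψ₁.app R ∩ face σ ∪ ψ₂.app R ∩ face σ) := by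
  rw [← union_inter_distrib_right]
  exact isExtreme_face.convexHull_inter_subset (convex_Icc 0 1)
    (union_subset (app_subset_s6 (convex_Icc 0 1) hR ψ₁) (app_subset_s6 (convex_Icc 0 1) hR ψ₂))

lemma app_inter_face_subset_of_faceVerts_subset_pair (hT : T ⊆ Icc 0 1)
    {σ : Fin n → Option Bool} {u v : Fin n → ℝ} (hV : faceVerts σ ⊆ {u, v}) (ψ : Fml n) :
    ψ.app T ∩ face σ ⊆ convexHull ℝ {w ∈ faceVerts σ | ψ.eval w} := by
  induction ψ with
  | pos i => exact fun x hx => mem_convexHull_faceVerts_of_apply_mem (b := true) hx.2 hx.1.2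
  | neg i => exact fun x hx => mem_convexHull_faceVerts_of_apply_mem (b := false) hx.2 hx.1.2
  | and ψ₁ ψ₂ ih₁ ih₂ =>
    rintro x ⟨⟨hx₁, hx₂⟩, hx⟩
    refine convexHull_mono ?_ (convexHull_inter_convexHull_subset_of_subset_pair
      ((sep_subset _ _).trans hV) ((sep_subset _ _).trans hV) ⟨ih₁ ⟨hx₁, hx⟩, ih₂ ⟨hx₂, hx⟩⟩)
    exact fun w hw => ⟨hw.1.1, hw.1.2, hw.2.2⟩
  | or ψ₁ ψ₂ ih₁ ih₂ =>
    refine (app_or_inter_face_subset hT ψ₁ ψ₂ σ).trans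
      (convexHull_min (union_subset ?_ ?_) (convex_convexHull ℝ _))
    · exact ih₁.trans (convexHull_mono fun w ⟨hw, h⟩ => ⟨hw, Or.inl h⟩)
    · exact ih₂.trans (convexHull_mono fun w ⟨hw, h⟩ => ⟨hw, Or.inr h⟩)

lemma app_inter_face_subset_of_not_eval (hR : R ⊆ Icc 0 1) {σ : Fin n → Option Bool}
    {w : Fin n → ℝ} (hw : w ∈ faceVerts σ) {ψ : Fml n} (hψ : ¬ ψ.eval w) :
    ψ.app R ∩ face σ ⊆
      convexHull ℝ {y ∈ R ∩ face σ | ∃ i b, σ i = none ∧ y i ∈ coordFace (some b)} := by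
  have free_of_ne {x : Fin n → ℝ} {i : Fin n} (hx : x ∈ face σ) (h : x i ≠ w i) : σ i = none :=
    by_contra fun hi => h (apply_eq_of_mem_face hx (faceVerts_subset_face hw) hi)
  induction ψ with
  | pos i =>
    rintro x ⟨⟨hxR, hxi⟩, hx⟩
    exact subset_convexHull ℝ _
      ⟨⟨hxR, hx⟩, i, true, free_of_ne hx (hxi ▸ Ne.symm hψ), hxi⟩
  | neg i =>
    rintro x ⟨⟨hxR, hxi⟩, hx⟩
    exact subset_convexHull ℝ _
      ⟨⟨hxR, hx⟩, i, false, free_of_ne hx (hxi ▸ Ne.symm hψ), hxi⟩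
  | and ψ₁ ψ₂ ih₁ ih₂ =>
    rcases not_and_or.1 hψ with h | h
    · exact fun x hx => ih₁ h ⟨hx.1.1, hx.2⟩
    · exact fun x hx => ih₂ h ⟨hx.1.2, hx.2⟩
  | or ψ₁ ψ₂ ih₁ ih₂ =>
    obtain ⟨h₁, h₂⟩ := not_or.1 hψ
    exact (app_or_inter_face_subset hR ψ₁ ψ₂ σ).trans
      (convexHull_min (union_subset (ih₁ h₁) (ih₂ h₂)) (convex_convexHull ℝ _))

def HullOnFaces (d : ℕ) (R : Set (Fin n → ℝ)) : Prop :=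
  ∀ σ : Fin n → Option Bool, (freeCoords σ).card = d →
    R ∩ face σ ⊆ convexHull ℝ {w ∈ faceVerts σ | φ.eval w}

lemma hullOnFaces_one_app (hT : T ⊆ Icc 0 1) : φ.HullOnFaces 1 (φ.app T) := by
  intro σ hσ x hx
  obtain ⟨j, hj⟩ := Finset.card_eq_one.1 hσ
  have hfixed : ∀ i ≠ j, σ i ≠ none := fun i hi hσi =>
    hi (Finset.mem_singleton.1 (hj ▸ by simp [freeCoords, hσi]))
  exact app_inter_face_subset_of_faceVerts_subset_pair hT (faceVerts_subset_pair hx.2 hfixed) φ hx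

lemma HullOnFaces.app {d : ℕ} (hR : R ⊆ Icc 0 1) (h : φ.HullOnFaces d R) :
    φ.HullOnFaces (d + 1) (φ.app R) := by
  intro σ hσ x hx
  by_cases hunsat : ∃ w ∈ faceVerts σ, ¬ φ.eval w
  swap
  · rw [sep_eq_self_iff_mem_true.2 (by simpa using hunsat), convexHull_faceVerts]
    exact hx.2
  obtain ⟨w, hw, hφw⟩ := hunsat
  refine convexHull_min ?_ (convex_convexHull ℝ _) (app_inter_face_subset_of_not_eval hR hw hφw hx)
  rintro y ⟨⟨hyR, hy⟩, i, b, hi, hyi⟩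
  have hcard : (freeCoords (update σ i (some b))).card = d := by
    have := card_free_update hi b
    omega
  refine convexHull_mono ?_ (h _ hcard ⟨hyR, mem_face_update hy hyi⟩)
  exact fun v hv => ⟨faceVerts_update_subset hy hyi hv.1, hv.2⟩

lemma hullOnFaces_iterApp (hQ : Q ⊆ Icc 0 1) (k : ℕ) :
    φ.HullOnFaces (k + 1) (φ.iterApp (k + 1) Q) := by
  induction k with
  | zero => exact hullOnFaces_one_app φ hQ
  | succ k ih => exact ih.app φ (iterApp_subset_s6 φ (convex_Icc 0 1) hQ (k + 1))

end Fml

theorem stmt6_general {n : ℕ} (φ : Fml n) (S Q : Set (Fin n → ℝ))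
    (hS : S = {x ∈ CubeVerts n | φ.eval x})
    (hQconv : Convex ℝ Q) (hQcube : Q ⊆ Set.Icc (0 : Fin n → ℝ) 1) (hSQ : S ⊆ Q) :
    φ.iterApp n Q = convexHull ℝ S := by
  obtain _ | k := n
  · exact isEmptyElim φ
  refine Subset.antisymm (fun x hx => ?_) (convexHull_min ?_ (φ.convex_iterApp hQconv _))
  · have h := φ.hullOnFaces_iterApp hQcube k (fun _ => none) (by simp [UnitCube.freeCoords])
    rw [UnitCube.face_none, UnitCube.faceVerts_none, ← hS] at h
    exact h ⟨hx, φ.iterApp_subset_s6 (convex_Icc 0 1) hQcube _ hx⟩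
  · exact φ.subset_iterApp hSQ (fun x hx => (hS ▸ hx).2) _

theorem stmt6 {n : ℕ} (φ : Fml n) (S Q : Set (Fin n → ℝ))
    (hS : S = {x ∈ CubeVerts n | φ.eval x}) (hSne : S.Nonempty)
    (hQconv : Convex ℝ Q) (hQcube : Q ⊆ Set.Icc (0 : Fin n → ℝ) 1) (hSQ : S ⊆ Q) :
    φ.iterApp n Q = convexHull ℝ S :=
  stmt6_general φ S Q hS hQconv hQcube hSQ
end

section
/- For every nonempty set S ⊆ {0,1}^n, the notch ν(S) of S (the largest notch of an inequality in standard form valid for S) equals the smallest integer k such that every k-dimensional face of the cube [0,1]^n contains a point of S. -/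
/-- The notch of an inequality in standard form: the smallest `ν` such that
every `J ⊆ [n]` with `|J| ≥ ν` satisfies `∑_{j ∈ J} c j ≥ δ`. -/
noncomputable def notchOf {n : ℕ} (c : Fin n → ℝ) (δ : ℝ) : ℕ :=
  sInf {ν | NotchLE c δ ν}

/-- The notch of a nonempty set `S` of 0/1 points: the largest notch of an
inequality in standard form that is valid for `S`. -/
noncomputable def notchSet {n : ℕ} (S : Set (Fin n → ℝ)) : ℕ :=
  sSup {ν | ∃ (Ip : Finset (Fin n)) (c : Fin n → ℝ) (δ : ℝ),
    (∀ i, 0 ≤ c i) ∧ 0 ≤ δ ∧ StdValid Ip c δ S ∧ notchOf c δ = ν}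

lemma lhs_eq {n : ℕ} (Ip : Finset (Fin n)) (c : Fin n → ℝ) (x : Fin n → ℝ)
    (hx : ∀ i, x i = 0 ∨ x i = 1) :
    ∑ i ∈ Ip, c i * x i + ∑ i ∈ Ipᶜ, c i * (1 - x i)
      = ∑ i ∈ Finset.univ.filter
          (fun i => x i ≠ (if i ∈ Ip then (0:ℝ) else 1)), c i := by
  rw [Finset.sum_filter]
  have h1 : ∑ i ∈ Ip, c i * x i
      = ∑ i ∈ Finset.univ.filter (· ∈ Ip), c i * x i := by
    congr 1; simp
  have h2 : ∑ i ∈ Ipᶜ, c i * (1 - x i)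
      = ∑ i ∈ Finset.univ.filter (· ∉ Ip), c i * (1 - x i) := by
    congr 1; ext i; simp
  rw [h1, h2, ← Finset.sum_ite]
  apply Finset.sum_congr rfl
  intro i _
  rcases hx i with h | h <;> by_cases hi : i ∈ Ip <;> simp [h, hi]

theorem stmt10 {n : ℕ} (S : Set (Fin n → ℝ)) (hScube : S ⊆ CubeVerts n)
    (hSne : S.Nonempty) :
    notchSet S =
      sInf {k | ∀ (F : Finset (Fin n)) (a : Fin n → ℝ), F.card = n - k →
        (∀ i ∈ F, a i = 0 ∨ a i = 1) → ∃ x ∈ S, ∀ i ∈ F, x i = a i} := by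
  set Kset := {k | ∀ (F : Finset (Fin n)) (a : Fin n → ℝ), F.card = n - k →
        (∀ i ∈ F, a i = 0 ∨ a i = 1) → ∃ x ∈ S, ∀ i ∈ F, x i = a i} with hKsetdef
  set T := {ν | ∃ (Ip : Finset (Fin n)) (c : Fin n → ℝ) (δ : ℝ),
    (∀ i, 0 ≤ c i) ∧ 0 ≤ δ ∧ StdValid Ip c δ S ∧ notchOf c δ = ν} with hTdef
  have hn : n ∈ Kset := by
    intro F a hF _
    obtain ⟨x, hx⟩ := hSne
    have hF0 : F = ∅ := Finset.card_eq_zero.mp (by omega)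
    exact ⟨x, hx, by simp [hF0]⟩
  set K := sInf Kset with hKdef
  have hKmem : K ∈ Kset := Nat.sInf_mem ⟨n, hn⟩
  have hKn : K ≤ n := Nat.sInf_le hn
  -- every valid inequality has notch ≤ K
  have hub : ∀ ν ∈ T, ν ≤ K := by
    rintro ν ⟨Ip, c, δ, h0c, h0δ, hvalid, rfl⟩
    apply Nat.sInf_le
    intro J hJ
    obtain ⟨J', hJ'sub, hJ'card⟩ := Finset.exists_subset_card_eq (show K ≤ J.card from hJ)
    set a : Fin n → ℝ := fun i => if i ∈ Ip then (0:ℝ) else 1 with hadef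
    have hFcard : (J'ᶜ : Finset (Fin n)).card = n - K := by
      rw [Finset.card_compl, hJ'card]; simp
    obtain ⟨x, hxS, hxF⟩ := hKmem J'ᶜ a hFcard (by
      intro i _
      by_cases hi : i ∈ Ip <;> simp [hadef, hi])
    have hxc := hScube hxS
    have h1 := hvalid x hxS
    rw [lhs_eq Ip c x hxc] at h1
    refine le_trans h1 (le_trans (Finset.sum_le_sum_of_subset_of_nonneg ?_
      (fun i _ _ => h0c i)) (Finset.sum_le_sum_of_subset_of_nonneg hJ'sub
      (fun i _ _ => h0c i)))
    intro i hi
    rw [Finset.mem_filter] at hi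
    by_contra hiJ'
    exact hi.2 (hxF i (Finset.mem_compl.mpr hiJ'))
  have hKT : K ∈ T := by
    rcases Nat.eq_zero_or_pos K with hK0 | hKpos
    · refine ⟨∅, fun _ => 0, 0, fun i => le_rfl, le_rfl, ?_, ?_⟩
      · intro x _; simp
      · rw [hK0]
        apply Nat.sInf_eq_zero.mpr
        left
        intro J _
        simp
    · -- K ≥ 1 : K - 1 ∉ Kset gives a face missing S
      have hKm1 : K - 1 ∉ Kset := Nat.notMem_of_lt_sInf (by omega)
      rw [hKsetdef] at hKm1
      simp only [Set.mem_setOf_eq, not_forall] at hKm1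
      obtain ⟨F, a, hFcard, ha, hmiss⟩ := hKm1
      push_neg at hmiss
      -- hmiss : ∀ x ∈ S, ∃ i ∈ F, x i ≠ a i
      set c : Fin n → ℝ := fun i => if i ∈ F then (1:ℝ) else 0 with hcdef
      set Ip : Finset (Fin n) := F.filter (fun i => a i = 0) with hIpdef
      have h0c : ∀ i, 0 ≤ c i := by intro i; by_cases h : i ∈ F <;> simp [hcdef, h]
      have hz : ∀ i ∈ F, (if i ∈ Ip then (0:ℝ) else 1) = a i := by
        intro i hiF
        by_cases h : a i = 0
        · simp [hIpdef, Finset.mem_filter, hiF, h]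
        · have : a i = 1 := (ha i hiF).resolve_left h
          simp [hIpdef, Finset.mem_filter, h, this]
      have hvalid : StdValid Ip c 1 S := by
        intro x hxS
        rw [lhs_eq Ip c x (hScube hxS)]
        obtain ⟨i₀, hi₀F, hne⟩ := hmiss x hxS
        have hi₀D : i₀ ∈ Finset.univ.filter
            (fun i => x i ≠ (if i ∈ Ip then (0:ℝ) else 1)) := by
          rw [Finset.mem_filter]
          refine ⟨Finset.mem_univ _, ?_⟩
          rw [hz i₀ hi₀F]
          exact hne
        calc (1:ℝ) = c i₀ := by simp [hcdef, hi₀F]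
          _ ≤ _ := Finset.single_le_sum (fun i _ => h0c i) hi₀D
      have hNLK : NotchLE c 1 K := by
        intro J hJ
        have hcard : (J ∩ F).Nonempty := by
          rw [← Finset.card_pos]
          have h1 := Finset.card_inter_add_card_union J F
          have h2 : (J ∪ F).card ≤ n := by
            simpa using Finset.card_le_univ (J ∪ F)
          omega
        obtain ⟨i₁, hi₁⟩ := hcard
        rw [Finset.mem_inter] at hi₁
        calc (1:ℝ) = c i₁ := by simp [hcdef, hi₁.2]
          _ ≤ _ := Finset.single_le_sum (fun i _ => h0c i) hi₁.1
      refine ⟨Ip, c, 1, h0c, zero_le_one, hvalid, ?_⟩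
      refine le_antisymm (Nat.sInf_le hNLK) (le_csInf ⟨K, hNLK⟩ ?_)
      intro m hm
      by_contra h
      push_neg at h
      have hmk : m ≤ K - 1 := by omega
      have hc : (Fᶜ : Finset (Fin n)).card = K - 1 := by
        rw [Finset.card_compl, hFcard]
        simp
        omega
      have := hm Fᶜ (by omega)
      have hzero : ∑ j ∈ Fᶜ, c j = 0 := by
        apply Finset.sum_eq_zero
        intro i hi
        rw [Finset.mem_compl] at hi
        simp [hcdef, hi]
      rw [hzero] at this
      linarith
  show sSup T = K
  exact le_antisymm (csSup_le ⟨K, hKT⟩ hub) (le_csSup ⟨K, hub⟩ hKT)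
end

section
/- Let n ∈ ℤ≥2 be even, let G = (V,E) be the complete graph on n nodes, and let S := {x ∈ {0,1}^E : supp(x) contains a perfect matching of G}. Let φ be any monotone Boolean formula in the variables x_e (e ∈ E) defining S, and let P := {x ∈ [0,1]^E : Σ_{e ∈ δ(U)} x_e ≥ 1 for every U ⊆ V with |U| odd}. Then conv(S) ⊆ φ([0,1]^E) ⊆ P. -/
/-- Monotone Boolean formulas with variables indexed by a type `α`. -/
inductive MFml (α : Type) : Type
  | var : α → MFml α
  | and : MFml α → MFml α → MFml α
  | or  : MFml α → MFml α → MFml α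

namespace MFml

/-- Evaluation of a monotone formula on a (0/1-valued) real point. -/
def eval {α : Type} : MFml α → (α → ℝ) → Prop
  | var e, x => x e = 1
  | and φ ψ, x => φ.eval x ∧ ψ.eval x
  | or φ ψ, x => φ.eval x ∨ ψ.eval x

/-- The set `φ(Q)` obtained by feeding the convex set `Q` into the formula `φ`. -/
def app {α : Type} : MFml α → Set (α → ℝ) → Set (α → ℝ)
  | var e, Q => {x ∈ Q | x e = 1}
  | and φ ψ, Q => φ.app Q ∩ ψ.app Q
  | or φ ψ, Q => convexHull ℝ (φ.app Q ∪ ψ.app Q)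

end MFml

/-- The edge set of the complete graph on `Fin n`: unordered pairs of distinct
vertices. -/
abbrev Edge (n : ℕ) : Type := {e : Sym2 (Fin n) // ¬ e.IsDiag}

/-- The 0/1 points of the cube `[0,1]^E`. -/
def EdgeCubeVerts (n : ℕ) : Set (Edge n → ℝ) := {x | ∀ e, x e = 0 ∨ x e = 1}

/-- `supp(x)` contains a perfect matching: there is a set `M` of edges with
`x_e = 1` for every `e ∈ M` such that every vertex lies in exactly one edge
of `M`. -/
def ContainsPM {n : ℕ} (x : Edge n → ℝ) : Prop :=
  ∃ M : Set (Sym2 (Fin n)),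
    (∀ e ∈ M, ∃ h : ¬ e.IsDiag, x ⟨e, h⟩ = 1) ∧
    ∀ v : Fin n, ∃! e, e ∈ M ∧ v ∈ e

open Classical in
/-- The polytope defined by the odd cut inequalities
`∑_{e ∈ δ(U)} x_e ≥ 1` for every odd set `U` of vertices. -/
noncomputable def OddCutPolytope (n : ℕ) : Set (Edge n → ℝ) :=
  {x | x ∈ Set.Icc (0 : Edge n → ℝ) 1 ∧
    ∀ U : Finset (Fin n), Odd U.card →
      1 ≤ ∑ e ∈ Finset.univ.filter
        (fun e : Edge n => ∃ u ∈ U, ∃ v, v ∉ U ∧ e.1 = s(u, v)),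
        x e}


namespace MFml

theorem eval_mono {α : Type} (φ : MFml α) {x y : α → ℝ}
    (h : ∀ e, x e = 1 → y e = 1) (hx : φ.eval x) : φ.eval y := by
  induction φ with
  | var e => exact h e hx
  | and φ ψ ihφ ihψ => exact ⟨ihφ hx.1, ihψ hx.2⟩
  | or φ ψ ihφ ihψ => exact hx.elim (fun h' => Or.inl (ihφ h')) (fun h' => Or.inr (ihψ h'))

theorem app_subset {α : Type} (φ : MFml α) {Q : Set (α → ℝ)} (hQ : Convex ℝ Q) :
    φ.app Q ⊆ Q := by
  induction φ with
  | var e => exact Set.sep_subset _ _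
  | and φ ψ ihφ ihψ => exact Set.Subset.trans Set.inter_subset_left ihφ
  | or φ ψ ihφ ihψ => exact convexHull_min (Set.union_subset ihφ ihψ) hQ

theorem app_convex {α : Type} (φ : MFml α) {Q : Set (α → ℝ)} (hQ : Convex ℝ Q) :
    Convex ℝ (φ.app Q) := by
  induction φ with
  | var e =>
    have h1 : Convex ℝ {x : α → ℝ | x e = 1} := by
      intro x hx y hy a b _ _ hab
      simp only [Set.mem_setOf_eq] at *
      simp [hx, hy, hab]
    exact hQ.inter h1
  | and φ ψ ihφ ihψ => exact ihφ.inter ihψ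
  | or φ ψ ihφ ihψ => exact convex_convexHull ℝ _

theorem mem_app {α : Type} (φ : MFml α) {Q : Set (α → ℝ)} {x : α → ℝ}
    (hx : x ∈ Q) (he : φ.eval x) : x ∈ φ.app Q := by
  induction φ with
  | var e => exact ⟨hx, he⟩
  | and φ ψ ihφ ihψ => exact ⟨ihφ he.1, ihψ he.2⟩
  | or φ ψ ihφ ihψ =>
    refine subset_convexHull ℝ _ ?_
    exact he.elim (fun h' => Or.inl (ihφ h')) (fun h' => Or.inr (ihψ h'))

end MFml

theorem even_card_of_invol {β : Type} [DecidableEq β] (U : Finset β) (f : β → β)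
    (hmap : ∀ u ∈ U, f u ∈ U) (hinv : ∀ u ∈ U, f (f u) = u)
    (hne : ∀ u ∈ U, f u ≠ u) : Even U.card := by
  induction U using Finset.strongInduction with
  | _ U ih =>
    rcases U.eq_empty_or_nonempty with rfl | ⟨v, hv⟩
    · simp
    · have hfv : f v ∈ U := hmap v hv
      have hvfv : f v ≠ v := hne v hv
      set U' := U \ {v, f v} with hU'
      have hsub : {v, f v} ⊆ U := by
        intro u hu
        rcases Finset.mem_insert.mp hu with rfl | hu
        · exact hv
        · rcases Finset.mem_singleton.mp hu with rfl; exact hfv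
      have hssub : U' ⊂ U := Finset.sdiff_ssubset hsub (by simp)
      have hmem' : ∀ u, u ∈ U' ↔ u ∈ U ∧ u ≠ v ∧ u ≠ f v := by
        intro u; simp [hU', and_assoc]
      have h1 : ∀ u ∈ U', f u ∈ U' := by
        intro u hu
        rw [hmem'] at hu ⊢
        obtain ⟨huU, huv, hufv⟩ := hu
        refine ⟨hmap u huU, ?_, ?_⟩
        · intro h; apply hufv; rw [← hinv u huU, h]
        · intro h; apply huv; rw [← hinv u huU, h, hinv v hv]
      have h2 : ∀ u ∈ U', f (f u) = u := fun u hu => hinv u ((hmem' u).mp hu).1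
      have h3 : ∀ u ∈ U', f u ≠ u := fun u hu => hne u ((hmem' u).mp hu).1
      have heven := ih U' hssub h1 h2 h3
      have hpair : ({v, f v} : Finset β).card = 2 := by
        rw [Finset.card_insert_of_notMem (by simp [Ne.symm hvfv]), Finset.card_singleton]
      have h2le : 2 ≤ U.card := hpair ▸ Finset.card_le_card hsub
      have hcard : U.card = U'.card + 2 := by
        rw [hU', Finset.card_sdiff_of_subset hsub, hpair]; omega
      rw [hcard]
      exact heven.add even_two

theorem app_cut {α : Type} [DecidableEq α] (φ : MFml α) (D : Finset α)
    (h : ∀ x : α → ℝ, (∀ e, x e = 0 ∨ x e = 1) → φ.eval x → ∃ e ∈ D, x e = 1) :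
    ∀ x ∈ φ.app (Set.Icc (0 : α → ℝ) 1), 1 ≤ ∑ e ∈ D, x e := by
  induction φ with
  | var a =>
    intro x hx
    obtain ⟨hxQ, hxa⟩ := hx
    have haD : a ∈ D := by
      obtain ⟨e, heD, he1⟩ := h (fun e => if e = a then 1 else 0)
        (fun e => by by_cases he : e = a <;> simp [he]) (by simp [MFml.eval])
      by_cases he : e = a
      · exact he ▸ heD
      · simp [he] at he1
    calc (1:ℝ) = x a := hxa.symm
    _ ≤ ∑ e ∈ D, x e :=
      Finset.single_le_sum (fun e _ => Pi.le_def.mp hxQ.1 e) haD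
  | and φ ψ ihφ ihψ =>
    intro x hx
    set y : α → ℝ := fun e => if e ∈ D then 0 else 1 with hy
    have hy01 : ∀ e, y e = 0 ∨ y e = 1 := fun e => by
      by_cases he : e ∈ D <;> simp [hy, he]
    by_cases hev : φ.eval y
    · -- then ψ must have the cut property
      refine ihψ ?_ x hx.2
      intro z hz hez
      by_contra hno
      push_neg at hno
      have hmono : ∀ e, z e = 1 → y e = 1 := by
        intro e hze
        by_cases he : e ∈ D
        · exact absurd hze (hno e he)
        · simp [hy, he]
      obtain ⟨e, heD, he1⟩ := h y hy01 ⟨hev, MFml.eval_mono ψ hmono hez⟩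
      simp [hy, heD] at he1
    · refine ihφ ?_ x hx.1
      intro z hz hez
      by_contra hno
      push_neg at hno
      have hmono : ∀ e, z e = 1 → y e = 1 := by
        intro e hze
        by_cases he : e ∈ D
        · exact absurd hze (hno e he)
        · simp [hy, he]
      exact hev (MFml.eval_mono φ hmono hez)
  | or φ ψ ihφ ihψ =>
    intro x hx
    have hlin : IsLinearMap ℝ (fun x : α → ℝ => ∑ e ∈ D, x e) :=
      ⟨fun u v => by simp [Finset.sum_add_distrib],
       fun c u => by simp [Finset.mul_sum]⟩
    have hconv : Convex ℝ {x : α → ℝ | 1 ≤ ∑ e ∈ D, x e} := convex_halfSpace_ge hlin 1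
    refine convexHull_min (Set.union_subset ?_ ?_) hconv hx
    · exact fun z hz => ihφ (fun w hw hew => h w hw (Or.inl hew)) z hz
    · exact fun z hz => ihψ (fun w hw hew => h w hw (Or.inr hew)) z hz

theorem pm_even_contra {n : ℕ} {x : Edge n → ℝ} (hx : ContainsPM x)
    {U : Finset (Fin n)} (hodd : Odd U.card)
    (hno : ∀ e : Edge n, (∃ u ∈ U, ∃ v, v ∉ U ∧ e.1 = s(u, v)) → x e ≠ 1) : False := by
  obtain ⟨M, hM1, hM2⟩ := hx
  choose edge hedge huniq using hM2
  have hdiag : ∀ v, ¬ (edge v).IsDiag := fun v => ((hM1 _ (hedge v).1).choose)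
  have hx1 : ∀ v, x ⟨edge v, hdiag v⟩ = 1 := fun v => (hM1 _ (hedge v).1).choose_spec
  set f : Fin n → Fin n := fun v => Sym2.Mem.other' (hedge v).2 with hf
  have hspec : ∀ v, edge v = s(v, f v) := fun v => (Sym2.other_spec' (hedge v).2).symm
  have hmemf : ∀ v, f v ∈ edge v := fun v => Sym2.other_mem' (hedge v).2
  have hne : ∀ v, f v ≠ v := by
    intro v h
    apply hdiag v
    rw [hspec v, h]
    exact Sym2.mk_isDiag_iff.mpr rfl
  have hEq : ∀ v, edge (f v) = edge v :=
    fun v => (huniq (f v) (edge v) ⟨(hedge v).1, hmemf v⟩).symm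
  have hff : ∀ v, f (f v) = v := by
    intro v
    have key : ∀ (z : Sym2 (Fin n)) (hz : f v ∈ z), z = edge v → Sym2.Mem.other' hz = v := by
      intro z hz hzz
      subst hzz
      exact Sym2.other_invol' (hedge v).2 hz
    exact key (edge (f v)) (hedge (f v)).2 (hEq v)
  have hmapU : ∀ u ∈ U, f u ∈ U := by
    intro u hu
    by_contra hfu
    exact hno ⟨edge u, hdiag u⟩ ⟨u, hu, f u, hfu, hspec u⟩ (hx1 u)
  have heven : Even U.card :=
    even_card_of_invol U f hmapU (fun u _ => hff u) (fun u _ => hne u)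
  exact (Nat.not_even_iff_odd.mpr hodd) heven


theorem stmt14 {n : ℕ} (hn : 2 ≤ n) (heven : Even n)
    (S : Set (Edge n → ℝ)) (hS : S = {x ∈ EdgeCubeVerts n | ContainsPM x})
    (φ : MFml (Edge n)) (hφ : ∀ x ∈ EdgeCubeVerts n, (φ.eval x ↔ ContainsPM x)) :
    convexHull ℝ S ⊆ φ.app (Set.Icc (0 : Edge n → ℝ) 1) ∧
      φ.app (Set.Icc (0 : Edge n → ℝ) 1) ⊆ OddCutPolytope n := by
  have hQconv : Convex ℝ (Set.Icc (0 : Edge n → ℝ) 1) := convex_Icc 0 1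
  constructor
  · apply convexHull_min _ (MFml.app_convex φ hQconv)
    intro x hx
    rw [hS] at hx
    obtain ⟨hx01, hxPM⟩ := hx
    have hxQ : x ∈ Set.Icc (0 : Edge n → ℝ) 1 := by
      simp only [Set.mem_Icc, Pi.le_def]
      constructor <;> intro e <;> rcases hx01 e with h | h <;> simp [h]
    exact MFml.mem_app φ hxQ ((hφ x hx01).mpr hxPM)
  · intro x hx
    refine ⟨MFml.app_subset φ hQconv hx, ?_⟩
    intro U hU
    apply app_cut φ _ ?_ x hx
    intro z hz hez
    by_contra hno
    push_neg at hno
    apply pm_even_contra ((hφ z hz).mp hez) hU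
    intro e he hze
    exact hno e (Finset.mem_filter.mpr ⟨Finset.mem_univ e, he⟩) hze
end
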